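/- One-period robust dual representation without optimization over strategies: for any measurable X : Ω → ℝ, any h ∈ ℝ^d, and any measurable Y : Ω → [0,∞), one has sup over P ∈ 𝒫 of log E_P[exp(X + h·ΔS)] = sup over Q ∈ 𝒞 of ( E_Q[X + h·ΔS] − H(Q,𝒫) ), where 𝒞 := { Q probability measure : E_Q[|X| + |ΔS| + Y] + H(Q,𝒫) < ∞ }. -/

import Mathlib

open MeasureTheory ENNReal NNReal Real Filter Classical

noncomputable section

variable {Ω : Type*} [MeasurableSpace Ω]

/-- Relative entropy `H(Q,P) ∈ [0,∞]`, `+∞` if `Q` is not absolutely continuous w.r.t. `P`. -/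
def relEntropy (Q P : Measure Ω) : ℝ≥0∞ :=
  if Q ≪ P then
    (∫⁻ ω, ENNReal.ofReal ((Q.rnDeriv P ω).toReal * Real.log (Q.rnDeriv P ω).toReal + 1) ∂P) - 1
  else ⊤

/-- Robust relative entropy `H(Q,Pfam) = inf_{P ∈ Pfam} H(Q,P)`. -/
def robustEntropy (Q : Measure Ω) (Pfam : Set (Measure Ω)) : ℝ≥0∞ :=
  ⨅ P ∈ Pfam, relEntropy Q P

/-- Positive part of an extended real, valued in `ℝ≥0∞`. -/
def ePos (x : EReal) : ℝ≥0∞ := if x = ⊤ then ⊤ else ENNReal.ofReal x.toReal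

/-- Expectation `E_Q[X] = E_Q[X⁺] − E_Q[X⁻]` with value `−∞` when `E_Q[X⁻] = +∞`. -/
def eInt (Q : Measure Ω) (X : Ω → ℝ) : EReal :=
  if (∫⁻ ω, ENNReal.ofReal (-(X ω)) ∂Q) = ⊤ then ⊥
  else ((∫⁻ ω, ENNReal.ofReal (X ω) ∂Q : ℝ≥0∞) : EReal)
       - ((∫⁻ ω, ENNReal.ofReal (-(X ω)) ∂Q : ℝ≥0∞) : EReal)

/-- Expectation of an `EReal`-valued function, same convention. -/
def eIntE (Q : Measure Ω) (X : Ω → EReal) : EReal :=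
  if (∫⁻ ω, ePos (-(X ω)) ∂Q) = ⊤ then ⊥
  else ((∫⁻ ω, ePos (X ω) ∂Q : ℝ≥0∞) : EReal) - ((∫⁻ ω, ePos (-(X ω)) ∂Q : ℝ≥0∞) : EReal)

/-- `log E_P[exp X]` for real-valued `X`, valued in `EReal`. -/
def logMGF (P : Measure Ω) (X : Ω → ℝ) : EReal :=
  ENNReal.log (∫⁻ ω, ENNReal.ofReal (Real.exp (X ω)) ∂P)

/-- `log E_P[exp X]` for `EReal`-valued `X`. -/
def logMGFE (P : Measure Ω) (X : Ω → EReal) : EReal :=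
  ENNReal.log (∫⁻ ω, EReal.exp (X ω) ∂P)

/-- A set is `Pfam`-polar if it is null under every `P ∈ Pfam`. -/
def Polar (Pfam : Set (Measure Ω)) (N : Set Ω) : Prop := ∀ P ∈ Pfam, P N = 0

/-- No-arbitrage `NA(Pfam)` for a one-period market with increment `ΔS`. -/
def NA {d : ℕ} (Pfam : Set (Measure Ω)) (ΔS : Ω → Fin d → ℝ) : Prop :=
  ∀ h : Fin d → ℝ, Polar Pfam {ω : Ω | ∑ i, h i * ΔS ω i < 0} →
    Polar Pfam {ω : Ω | ∑ i, h i * ΔS ω i ≠ 0}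

/-- Convexity of a family of measures. -/
def ConvexFamily (Pfam : Set (Measure Ω)) : Prop :=
  ∀ P₁ ∈ Pfam, ∀ P₂ ∈ Pfam, ∀ t : ℝ≥0, t ≤ 1 →
    ((t : ℝ≥0∞) • P₁ + ((1 - t : ℝ≥0) : ℝ≥0∞) • P₂) ∈ Pfam

/-! Write `Z = X + h·ΔS`. For `≥`: if `E_Q[|X| + |ΔS| + Y] < ∞` then `Z` is `Q`-integrable, and for
each `P` the Gibbs inequality `E_Q[Z] - H(Q,P) ≤ log E_P[e^Z]` holds, the gap being the relative
entropy of `Q` with respect to the exponential tilt of `P` by `Z`; take the infimum over `P ∈ 𝒫`.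
For `≤`: by monotone convergence `log E_P[e^Z]` is the supremum over `n` of `log E_P[e^Z; A_n]`,
where `A_n = {|X| + |ΔS| + Y ≤ n}`. On `A_n` the variable `Z` is bounded, and the tilt `Q_n` of
`P|_{A_n}` by `Z` attains `E_{Q_n}[Z] - H(Q_n,P) = log E_P[e^Z; A_n]`; it lives on `A_n`, so it
lies in `𝒞`. On probability measures `H` is Mathlib's `klDiv`. -/

open InformationTheory

lemma abs_add_sum_mul_le {ι : Type*} [Fintype ι] (x : ℝ) (h v : ι → ℝ) :
    |x + ∑ i, h i * v i| ≤ (1 + ∑ i, |h i|) * (|x| + ∑ i, |v i|) := by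
  have hsum : ∑ i, |h i * v i| ≤ (∑ i, |h i|) * ∑ i, |v i| := by
    rw [Finset.sum_mul]
    refine Finset.sum_le_sum fun i _ => ?_
    rw [abs_mul]
    exact mul_le_mul_of_nonneg_left
      (Finset.single_le_sum (fun j _ => abs_nonneg (v j)) (Finset.mem_univ i)) (abs_nonneg _)
  have hH : 0 ≤ ∑ i, |h i| := Finset.sum_nonneg fun i _ => abs_nonneg _
  have hV : 0 ≤ ∑ i, |v i| := Finset.sum_nonneg fun i _ => abs_nonneg _
  calc |x + ∑ i, h i * v i| ≤ |x| + ∑ i, |h i * v i| :=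
        (abs_add_le _ _).trans (add_le_add_right (Finset.abs_sum_le_sum_abs _ _) _)
    _ ≤ (1 + ∑ i, |h i|) * (|x| + ∑ i, |v i|) := by nlinarith [abs_nonneg x]

lemma enorm_add_sum_mul_le {ι : Type*} [Fintype ι] (x y : ℝ) (h v : ι → ℝ) :
    ‖x + ∑ i, h i * v i‖ₑ ≤ ENNReal.ofReal (1 + ∑ i, |h i|) *
      (ENNReal.ofReal |x| + ENNReal.ofReal (∑ i, |v i|) + ENNReal.ofReal y) := by
  have hV : 0 ≤ ∑ i, |v i| := Finset.sum_nonneg fun i _ => abs_nonneg _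
  calc ‖x + ∑ i, h i * v i‖ₑ
      ≤ ENNReal.ofReal ((1 + ∑ i, |h i|) * (|x| + ∑ i, |v i|)) := by
        rw [Real.enorm_eq_ofReal_abs]; exact ENNReal.ofReal_le_ofReal (abs_add_sum_mul_le x h v)
    _ ≤ _ := by
        rw [ENNReal.ofReal_mul (by positivity), ENNReal.ofReal_add (abs_nonneg x) hV]
        exact mul_le_mul_right le_self_add _

lemma integrable_of_enorm_le_mul {μ : Measure Ω} {f : Ω → ℝ} (hf : AEStronglyMeasurable f μ)
    {e : Ω → ℝ≥0∞} {C : ℝ≥0} (hfe : ∀ ω, ‖f ω‖ₑ ≤ C * e ω) (he : ∫⁻ ω, e ω ∂μ ≠ ⊤) :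
    Integrable f μ :=
  ⟨hf, (lintegral_mono hfe).trans_lt <| by
    rw [lintegral_const_mul' _ _ ENNReal.coe_ne_top]
    exact ENNReal.mul_lt_top ENNReal.coe_lt_top he.lt_top⟩

lemma MeasureTheory.Integrable.lintegral_ofReal_ne_top {μ : Measure Ω} {f : Ω → ℝ}
    (hf : Integrable f μ) :
    ∫⁻ ω, ENNReal.ofReal (f ω) ∂μ ≠ ⊤ :=
  ne_top_of_le_ne_top hf.2.ne <| lintegral_mono fun ω => by
    rw [Real.enorm_eq_ofReal_abs]; exact ENNReal.ofReal_le_ofReal (le_abs_self _)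

lemma EReal.coe_sub_coe_ennreal_iInf {ι : Sort*} (r : ℝ) (K : ι → ℝ≥0∞) :
    (r : EReal) - ((⨅ i, K i : ℝ≥0∞) : EReal) = ⨆ i, ((r : EReal) - K i) := by
  have hcont : Continuous fun x : ℝ≥0∞ => (r : EReal) - x := by
    refine continuous_iff_continuousAt.2 fun x => ?_
    have hadd : ContinuousAt (fun p : EReal × EReal => p.1 + p.2) ((r : EReal), -(x : EReal)) :=
      EReal.continuousAt_add (.inl (EReal.coe_ne_top r)) (.inl (EReal.coe_ne_bot r))
    exact hadd.comp (f := fun y : ℝ≥0∞ => ((r : EReal), -(y : EReal)))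
      (continuous_const.prodMk (continuous_neg.comp continuous_coe_ennreal_ereal)).continuousAt
  exact Antitone.map_iInf_of_continuousAt (f := fun x : ℝ≥0∞ => (r : EReal) - x)
    hcont.continuousAt (fun x y hxy => EReal.sub_le_sub le_rfl (by exact_mod_cast hxy))
    (by simp)

lemma relEntropy_eq_klDiv (Q P : Measure Ω) [IsProbabilityMeasure Q] [IsFiniteMeasure P] :
    relEntropy Q P = klDiv Q P := by
  by_cases hQP : Q ≪ P
  swap
  · rw [relEntropy, if_neg hQP, klDiv_of_not_ac hQP]
  have hsplit : ∀ ω, ENNReal.ofReal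
        ((Q.rnDeriv P ω).toReal * Real.log (Q.rnDeriv P ω).toReal + 1) =
      ENNReal.ofReal (klFun (Q.rnDeriv P ω).toReal) + ENNReal.ofReal (Q.rnDeriv P ω).toReal := by
    intro ω
    rw [← ENNReal.ofReal_add (klFun_nonneg ENNReal.toReal_nonneg) ENNReal.toReal_nonneg,
      klFun_apply, sub_add_cancel]
  have hmass : ∫⁻ ω, ENNReal.ofReal (Q.rnDeriv P ω).toReal ∂P = 1 := by
    rw [lintegral_congr_ae (Measure.rnDeriv_lt_top Q P |>.mono fun ω hω =>
      ENNReal.ofReal_toReal hω.ne), Measure.lintegral_rnDeriv hQP, measure_univ]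
  rw [relEntropy, if_pos hQP, lintegral_congr hsplit,
    lintegral_add_right _ (Measure.measurable_rnDeriv Q P).ennreal_toReal.ennreal_ofReal, hmass,
    ENNReal.add_sub_cancel_right ENNReal.one_ne_top, klDiv_eq_lintegral_klFun_of_ac hQP]

lemma eInt_eq_integral {μ : Measure Ω} {f : Ω → ℝ} (hf : Integrable f μ) :
    eInt μ f = ∫ ω, f ω ∂μ := by
  have hpos := hf.lintegral_ofReal_ne_top
  have hneg : ∫⁻ ω, ENNReal.ofReal (-f ω) ∂μ ≠ ⊤ := hf.neg.lintegral_ofReal_ne_top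
  rw [eInt, if_neg hneg, integral_eq_lintegral_pos_part_sub_lintegral_neg_part hf,
    ← EReal.coe_ennreal_toReal hpos, ← EReal.coe_ennreal_toReal hneg, ← EReal.coe_sub]

lemma logMGF_eq_log_integral {μ : Measure Ω} [NeZero μ] {f : Ω → ℝ}
    (hf : Integrable (fun ω => Real.exp (f ω)) μ) :
    logMGF μ f = Real.log (∫ ω, Real.exp (f ω) ∂μ) := by
  rw [logMGF, ← ofReal_integral_eq_lintegral_ofReal hf (ae_of_all _ fun _ => (exp_pos _).le),
    ENNReal.log_ofReal_of_pos (integral_exp_pos hf)]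

lemma logMGF_eq_top_of_not_integrable {μ : Measure Ω} {f : Ω → ℝ} (hfm : AEMeasurable f μ)
    (hf : ¬ Integrable (fun ω => Real.exp (f ω)) μ) : logMGF μ f = ⊤ := by
  rw [← lintegral_ofReal_ne_top_iff_integrable
    (measurable_exp.comp_aemeasurable hfm).aestronglyMeasurable (f := fun ω => Real.exp (f ω))
    (ae_of_all _ fun _ => (exp_pos _).le), not_not] at hf
  rw [logMGF, hf, ENNReal.log_top]

lemma logMGF_eq_iSup_restrict (μ : Measure Ω) (f : Ω → ℝ) {A : ℕ → Set Ω} (hA : Monotone A)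
    (hU : ⋃ n, A n = Set.univ) : logMGF μ f = ⨆ n, logMGF (μ.restrict (A n)) f := by
  rw [logMGF, ← setLIntegral_univ, ← hU, setLIntegral_iUnion_of_directed _ hA.directed_le]
  exact ENNReal.logOrderIso.map_iSup _

lemma integral_sub_klDiv_le_logMGF {P Q : Measure Ω} [IsProbabilityMeasure P]
    [IsProbabilityMeasure Q] {f : Ω → ℝ} (hfP : AEMeasurable f P) (hfQ : Integrable f Q) :
    ((∫ ω, f ω ∂Q : ℝ) : EReal) - klDiv Q P ≤ logMGF P f := by
  by_cases hK : klDiv Q P = ⊤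
  · simp [hK]
  obtain ⟨hQP, hllr⟩ := klDiv_ne_top_iff.1 hK
  by_cases hexp : Integrable (fun ω => Real.exp (f ω)) P
  swap
  · rw [logMGF_eq_top_of_not_integrable hfP hexp]; exact le_top
  have := isProbabilityMeasure_tilted hexp
  have hgibbs := integral_llr_add_sub_measure_univ_nonneg
    (hQP.trans (absolutelyContinuous_tilted hexp)) (integrable_llr_tilted_right hQP hfQ hllr hexp)
  rw [integral_llr_tilted_right hQP hfQ hexp hllr, ← toReal_klDiv_of_measure_eq hQP (by simp)]
    at hgibbs
  rw [logMGF_eq_log_integral hexp, ← EReal.coe_ennreal_toReal hK, ← EReal.coe_sub,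
    EReal.coe_le_coe_iff]
  simp only [probReal_univ] at hgibbs
  linarith

section RestrictTilted

variable {P : Measure Ω} {A : Set Ω} {f : Ω → ℝ}

lemma ae_restrict_tilted_mem (hA : MeasurableSet A) : ∀ᵐ ω ∂(P.restrict A).tilted f, ω ∈ A :=
  (tilted_absolutelyContinuous _ f).ae_le (ae_restrict_mem hA)

lemma llr_restrict_tilted [SigmaFinite P] (hA : MeasurableSet A) (hf : AEMeasurable f P)
    (hexp : Integrable (fun ω => Real.exp (f ω)) (P.restrict A)) :
    llr ((P.restrict A).tilted f) P =ᵐ[(P.restrict A).tilted f]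
      fun ω => f ω - Real.log (∫ ω, Real.exp (f ω) ∂P.restrict A) := by
  have hAP : P.restrict A ≪ P := Measure.absolutelyContinuous_of_le Measure.restrict_le_self
  have hllrA : llr (P.restrict A) P =ᵐ[P.restrict A] 0 := by
    filter_upwards [ae_restrict_of_ae (Measure.rnDeriv_restrict_self P hA), ae_restrict_mem hA]
      with ω hω hωA
    simp [llr, hω, hωA]
  refine (tilted_absolutelyContinuous _ f).ae_le ?_
  filter_upwards [llr_tilted_left hAP hexp hf, hllrA] with ω hω hω0
  simp [hω, hω0]

lemma isProbabilityMeasure_restrict_tilted (hPA : P A ≠ 0)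
    (hexp : Integrable (fun ω => Real.exp (f ω)) (P.restrict A)) :
    IsProbabilityMeasure ((P.restrict A).tilted f) :=
  have : NeZero (P.restrict A) := ⟨mt Measure.restrict_eq_zero.1 hPA⟩
  isProbabilityMeasure_tilted hexp

variable {b : ℝ}

lemma integrable_exp_restrict_of_abs_le [IsFiniteMeasure P] (hA : MeasurableSet A)
    (hf : Measurable f) (hb : ∀ ω ∈ A, |f ω| ≤ b) :
    Integrable (fun ω => Real.exp (f ω)) (P.restrict A) :=
  .of_bound (measurable_exp.comp hf).aestronglyMeasurable (Real.exp b) <|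
    (ae_restrict_mem hA).mono fun ω hω => by
      rw [Real.norm_eq_abs, abs_of_pos (exp_pos _)]
      exact exp_le_exp.2 ((le_abs_self _).trans (hb ω hω))

lemma integrable_restrict_tilted_of_abs_le [IsFiniteMeasure P] (hA : MeasurableSet A)
    (hf : Measurable f) (hb : ∀ ω ∈ A, |f ω| ≤ b) (hPA : P A ≠ 0) :
    Integrable f ((P.restrict A).tilted f) := by
  have := isProbabilityMeasure_restrict_tilted hPA (integrable_exp_restrict_of_abs_le hA hf hb)
  exact .of_bound hf.aestronglyMeasurable b <|
    (ae_restrict_tilted_mem hA).mono fun ω hω => by rw [Real.norm_eq_abs]; exact hb ω hω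

lemma eInt_sub_klDiv_restrict_tilted [IsProbabilityMeasure P] (hA : MeasurableSet A)
    (hf : Measurable f) (hb : ∀ ω ∈ A, |f ω| ≤ b) (hPA : P A ≠ 0) :
    klDiv ((P.restrict A).tilted f) P ≠ ⊤ ∧
      eInt ((P.restrict A).tilted f) f - klDiv ((P.restrict A).tilted f) P =
        logMGF (P.restrict A) f := by
  have hexp := integrable_exp_restrict_of_abs_le (P := P) hA hf hb
  have := isProbabilityMeasure_restrict_tilted hPA hexp
  have : NeZero (P.restrict A) := ⟨mt Measure.restrict_eq_zero.1 hPA⟩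
  have hfQ := integrable_restrict_tilted_of_abs_le hA hf hb hPA
  have hQP : (P.restrict A).tilted f ≪ P := (tilted_absolutelyContinuous _ f).trans
    (Measure.absolutelyContinuous_of_le Measure.restrict_le_self)
  have hllr := llr_restrict_tilted hA hf.aemeasurable hexp
  have hK : klDiv ((P.restrict A).tilted f) P ≠ ⊤ :=
    klDiv_ne_top hQP ((integrable_congr hllr).2 (hfQ.sub (integrable_const _)))
  refine ⟨hK, ?_⟩
  have hKval : (klDiv ((P.restrict A).tilted f) P).toReal =
      ∫ ω, f ω ∂(P.restrict A).tilted f - Real.log (∫ ω, Real.exp (f ω) ∂P.restrict A) := by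
    rw [toReal_klDiv_of_measure_eq hQP (by simp), integral_congr_ae hllr,
      integral_sub hfQ (integrable_const _)]
    simp
  rw [eInt_eq_integral hfQ, logMGF_eq_log_integral hexp, ← EReal.coe_ennreal_toReal hK, hKval,
    ← EReal.coe_sub, _root_.sub_sub_cancel]

end RestrictTilted

theorem logMGF_le_iSup_eInt_sub_klDiv {P : Measure Ω} [IsProbabilityMeasure P] {f : Ω → ℝ}
    (hf : Measurable f) {e : Ω → ℝ≥0∞} (he : Measurable e) (he_ne_top : ∀ ω, e ω ≠ ⊤) {C : ℝ≥0}
    (hfe : ∀ ω, ‖f ω‖ₑ ≤ C * e ω) :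
    logMGF P f ≤ ⨆ (Q : Measure Ω)
      (_ : IsProbabilityMeasure Q ∧ ∫⁻ ω, e ω ∂Q ≠ ⊤ ∧ klDiv Q P ≠ ⊤), eInt Q f - klDiv Q P := by
  set A : ℕ → Set Ω := fun n => {ω | e ω ≤ n}
  have hA : ∀ n, MeasurableSet (A n) := fun n => measurableSet_le he measurable_const
  have hAmono : Monotone A := fun m n hmn ω (hω : e ω ≤ m) =>
    hω.trans (by exact_mod_cast hmn)
  have hAU : ⋃ n, A n = Set.univ := Set.iUnion_eq_univ_iff.2 fun ω =>
    (ENNReal.exists_nat_gt (he_ne_top ω)).imp fun _ hn => hn.le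
  rw [logMGF_eq_iSup_restrict P f hAmono hAU]
  refine iSup_le fun n => ?_
  by_cases hPA : P (A n) = 0
  · simp [Measure.restrict_eq_zero.2 hPA, logMGF]
  have hb (ω : Ω) (hω : ω ∈ A n) : |f ω| ≤ (C * n : ℝ≥0) := by
    have hfω : ‖f ω‖ₑ ≤ (C * n : ℝ≥0) := by simpa using (hfe ω).trans (mul_le_mul_right hω _)
    rw [enorm_le_coe] at hfω
    exact_mod_cast hfω
  obtain ⟨hK, hval⟩ := eInt_sub_klDiv_restrict_tilted (hA n) hf hb hPA
  have := isProbabilityMeasure_restrict_tilted hPA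
    (integrable_exp_restrict_of_abs_le (P := P) (hA n) hf hb)
  have he_int : ∫⁻ ω, e ω ∂(P.restrict (A n)).tilted f ≤ n := by
    calc ∫⁻ ω, e ω ∂(P.restrict (A n)).tilted f
        ≤ ∫⁻ _, (n : ℝ≥0∞) ∂(P.restrict (A n)).tilted f :=
          lintegral_mono_ae ((ae_restrict_tilted_mem (hA n)).mono fun ω hω => hω)
      _ = n := by simp
  rw [← hval]
  exact le_iSup₂_of_le ((P.restrict (A n)).tilted f)
    ⟨this, ne_top_of_le_ne_top (ENNReal.natCast_ne_top n) he_int, hK⟩ le_rfl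

section Robust

variable {Pfam : Set (Measure Ω)} {Q : Measure Ω} [IsProbabilityMeasure Q]

lemma robustEntropy_eq_iInf_klDiv (hprob : ∀ P ∈ Pfam, IsProbabilityMeasure P) :
    robustEntropy Q Pfam = ⨅ P ∈ Pfam, klDiv Q P :=
  iInf_congr fun P => iInf_congr fun hP => by
    have := hprob P hP; exact relEntropy_eq_klDiv Q P

lemma robustEntropy_le_klDiv {P : Measure Ω} [IsFiniteMeasure P] (hP : P ∈ Pfam) :
    robustEntropy Q Pfam ≤ klDiv Q P :=
  (iInf₂_le P hP).trans_eq (relEntropy_eq_klDiv Q P)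

theorem eInt_sub_robustEntropy_le_iSup_logMGF (hprob : ∀ P ∈ Pfam, IsProbabilityMeasure P)
    {f : Ω → ℝ} (hf : Measurable f) (hfQ : Integrable f Q) :
    eInt Q f - robustEntropy Q Pfam ≤ ⨆ P ∈ Pfam, logMGF P f := by
  simp only [eInt_eq_integral hfQ, robustEntropy_eq_iInf_klDiv hprob,
    EReal.coe_sub_coe_ennreal_iInf]
  exact iSup₂_mono fun P hP => by
    have := hprob P hP
    exact integral_sub_klDiv_le_logMGF hf.aemeasurable hfQ

end Robust

theorem one_period_representation_fixed_strategy_general {d : ℕ}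
    (Pfam : Set (Measure Ω))
    (hprob : ∀ P ∈ Pfam, IsProbabilityMeasure P)
    (ΔS : Ω → Fin d → ℝ) (hΔS : Measurable ΔS)
    (X : Ω → ℝ) (hX : Measurable X) (h : Fin d → ℝ)
    (Y : Ω → ℝ) (hY : Measurable Y) :
    (⨆ P ∈ Pfam, logMGF P (fun ω => X ω + ∑ i, h i * ΔS ω i)) =
      ⨆ (Q : Measure Ω) (_ : IsProbabilityMeasure Q ∧
          (∫⁻ ω, (ENNReal.ofReal |X ω| + ENNReal.ofReal (∑ i, |ΔS ω i|)
              + ENNReal.ofReal (Y ω)) ∂Q) ≠ ⊤ ∧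
          robustEntropy Q Pfam ≠ ⊤),
        (eInt Q (fun ω => X ω + ∑ i, h i * ΔS ω i) - (robustEntropy Q Pfam : EReal)) := by
  set Z : Ω → ℝ := fun ω => X ω + ∑ i, h i * ΔS ω i
  set e : Ω → ℝ≥0∞ := fun ω =>
    ENNReal.ofReal |X ω| + ENNReal.ofReal (∑ i, |ΔS ω i|) + ENNReal.ofReal (Y ω)
  have hZ : Measurable Z := by fun_prop
  have he : Measurable e := by fun_prop
  have hZe (ω : Ω) : ‖Z ω‖ₑ ≤ (1 + ∑ i, |h i|).toNNReal * e ω :=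
    enorm_add_sum_mul_le (X ω) (Y ω) h (ΔS ω)
  apply le_antisymm
  · refine iSup₂_le fun P hP => ?_
    have := hprob P hP
    refine (logMGF_le_iSup_eInt_sub_klDiv hZ he (fun ω => by simp [e]) hZe).trans <|
      iSup₂_mono' fun Q ⟨hQ, heQ, hK⟩ => ?_
    have hle := robustEntropy_le_klDiv (Q := Q) hP
    exact ⟨Q, ⟨hQ, heQ, ne_top_of_le_ne_top hK hle⟩,
      EReal.sub_le_sub le_rfl (EReal.coe_ennreal_le_coe_ennreal_iff.2 hle)⟩
  · exact iSup₂_le fun Q ⟨hQ, heQ, _⟩ => eInt_sub_robustEntropy_le_iSup_logMGF hprob hZ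
      (integrable_of_enorm_le_mul hZ.aestronglyMeasurable hZe heQ)

/-- One-period robust dual representation for a fixed strategy (Lemma 3.2):
`sup_{P∈𝒫} log E_P[exp(X + h·ΔS)] = sup_{Q∈𝒞} (E_Q[X + h·ΔS] − H(Q,𝒫))` where
`𝒞 = {Q : E_Q[|X| + |ΔS| + Y] + H(Q,𝒫) < ∞}`. -/
theorem one_period_representation_fixed_strategy {d : ℕ}
    (Pfam : Set (Measure Ω)) (hne : Pfam.Nonempty)
    (hprob : ∀ P ∈ Pfam, IsProbabilityMeasure P)
    (ΔS : Ω → Fin d → ℝ) (hΔS : Measurable ΔS)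
    (X : Ω → ℝ) (hX : Measurable X) (h : Fin d → ℝ)
    (Y : Ω → ℝ) (hY : Measurable Y) (hY0 : ∀ ω, 0 ≤ Y ω) :
    (⨆ P ∈ Pfam, logMGF P (fun ω => X ω + ∑ i, h i * ΔS ω i)) =
      ⨆ (Q : Measure Ω) (_ : IsProbabilityMeasure Q ∧
          (∫⁻ ω, (ENNReal.ofReal |X ω| + ENNReal.ofReal (∑ i, |ΔS ω i|)
              + ENNReal.ofReal (Y ω)) ∂Q) ≠ ⊤ ∧
          robustEntropy Q Pfam ≠ ⊤),
        (eInt Q (fun ω => X ω + ∑ i, h i * ΔS ω i) - (robustEntropy Q Pfam : EReal)) :=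
  one_period_representation_fixed_strategy_general Pfam hprob ΔS hΔS X hX h Y hY

end
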